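/- arXiv:1506.01644 — 2 statements merged into one kernel-verified Lean document; each statement's English description precedes it below -/
import Mathlib

section
/- Let δ ∈ (0,1), θ > 0, p ∈ [0,1], and b > 0. Then the series below converges absolutely and 2∫_0^1 [1 − (1 − pθ r^{2/δ}/(1+θ r^{2/δ}))^b]·r^{−3} dr = ∑_{k=1}^∞ (−1)^{k+1} · binom(b,k) · (pθ)^k · δ·∫_0^1 x^{k−δ−1}(1+θx)^{−k} dx, where by Euler's integral representation δ·∫_0^1 x^{k−δ−1}(1+θx)^{−k} dx = (δ/(k−δ))·₂F₁(k, k−δ; k+1−δ; −θ). (This is the analytic core of the formula M_b(p)^{−1} = 1 − ∑_{k=1}^∞ binom(b,k)(−pθ)^k (δ/(k−δ)) ₂F₁(k,k−δ;k+1−δ;−θ) for the b-th moment of the conditional success probability in a Poisson cellular network in which interfering base stations are active independently with probability p.) -/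
/-!
Substituting `x = r ^ (2 / δ)` turns the left-hand side into `δ ∫₀¹ (1 - (1 - y) ^ b) x ^ (-δ - 1) dx`
with `y = pθx / (1 + θx) ∈ [0, θ / (1 + θ)]`. Expanding `1 - (1 - y) ^ b` by the binomial series,
the `k`-th term is dominated by `|binom(b, k + 1)| (θ / (1 + θ)) ^ (k + 1) (1 + θ) x ^ (-δ)`: one
factor `y ≤ θx` cancels the singularity down to the integrable `x ^ (-δ)`, and the coefficients are
summable because `θ / (1 + θ) < 1` lies inside the radius of convergence. Dominated convergence then
integrates term by term. The hypergeometric identity is Euler's integral for `₂F₁(a, β; β + 1; x)`,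
where the factor `(1 - t) ^ 0` disappears and `Γ(β + 1) / Γ(β) = β`.
-/

open Real MeasureTheory

/-- Generalized binomial coefficient `binom(b,k) = b(b-1)⋯(b-k+1)/k!` for real `b`. -/
noncomputable def gbinom (b : ℝ) (k : ℕ) : ℝ :=
  Polynomial.eval b (descPochhammer ℝ k) / (Nat.factorial k : ℝ)

/-- The Gauss hypergeometric function `₂F₁(a,b;c;x)` defined through Euler's integral
representation `₂F₁(a,b;c;x) = Γ(c)/(Γ(b)Γ(c-b)) ∫_0^1 t^{b-1}(1-t)^{c-b-1}(1-xt)^{-a} dt`. -/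
noncomputable def hyp2F1 (a b c x : ℝ) : ℝ :=
  Real.Gamma c / (Real.Gamma b * Real.Gamma (c - b)) *
    ∫ t in Set.Ioo (0:ℝ) 1, t ^ (b - 1) * (1 - t) ^ (c - b - 1) * (1 - x * t) ^ (-a)

open Set

lemma gbinom_eq_ringChoose (b : ℝ) (k : ℕ) : gbinom b k = Ring.choose b k := by
  rw [Ring.choose_eq_smul, gbinom, smul_eq_mul, ← Polynomial.aeval_eq_smeval,
    Polynomial.aeval_def, ← Polynomial.eval_map, descPochhammer_map, div_eq_inv_mul]

lemma hasSum_gbinom_mul_pow (b : ℝ) {x : ℝ} (hx : |x| < 1) :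
    HasSum (fun k => gbinom b k * x ^ k) ((1 + x) ^ b) := by
  have h := Real.one_add_rpow_hasFPowerSeriesOnBall_zero (a := b) |>.hasSum
    (y := x) (by simpa [Metric.mem_eball, edist_dist] using hx)
  simpa [binomialSeries, FormalMultilinearSeries.ofScalars_apply_eq, gbinom_eq_ringChoose,
    mul_comm] using h

lemma summable_abs_gbinom_mul_pow (b : ℝ) {r : ℝ} (hr0 : 0 ≤ r) (hr : r < 1) :
    Summable fun k => |gbinom b k| * r ^ k := by
  lift r to NNReal using hr0
  have h := (binomialSeries ℝ b).summable_norm_mul_pow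
    (lt_of_lt_of_le (by exact_mod_cast hr) binomialSeries_radius_ge_one)
  simpa [binomialSeries, FormalMultilinearSeries.ofScalars_norm, gbinom_eq_ringChoose] using h

lemma hyp2F1_self_add_one (a x : ℝ) {c : ℝ} (hc : 0 < c) :
    hyp2F1 a c (c + 1) x = c * ∫ t in Ioo (0:ℝ) 1, t ^ (c - 1) * (1 - x * t) ^ (-a) := by
  simp only [hyp2F1, add_sub_cancel_left, sub_self, rpow_zero, mul_one, Gamma_one,
    Gamma_add_one hc.ne']
  rw [mul_div_cancel_right₀ _ (Gamma_pos_of_pos hc).ne']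

lemma mul_setIntegral_eq_div_mul_hyp2F1 (δ θ : ℝ) {k : ℝ} (hk : 0 < k - δ) :
    δ * (∫ x in Ioo (0:ℝ) 1, x ^ (k - δ - 1) * (1 + θ * x) ^ (-k)) =
      δ / (k - δ) * hyp2F1 k (k - δ) (k + 1 - δ) (-θ) := by
  rw [show k + 1 - δ = (k - δ) + 1 by ring, hyp2F1_self_add_one _ _ hk]
  simp only [neg_mul, sub_neg_eq_add]
  field_simp

lemma image_rpow_Ioo_zero_one {γ : ℝ} (hγ : 0 < γ) :
    (fun x : ℝ => x ^ γ) '' Ioo 0 1 = Ioo 0 1 := by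
  refine Subset.antisymm ?_ fun y hy => ⟨y ^ γ⁻¹, ?_, rpow_inv_rpow hy.1.le hγ.ne'⟩
  · rintro _ ⟨x, hx, rfl⟩
    exact ⟨rpow_pos_of_pos hx.1 γ, rpow_lt_one hx.1.le hx.2 hγ⟩
  · exact ⟨rpow_pos_of_pos hy.1 _, rpow_lt_one hy.1.le hy.2 (inv_pos.2 hγ)⟩

lemma setIntegral_Ioo_zero_one_comp_rpow {γ : ℝ} (hγ : 0 < γ) (g : ℝ → ℝ) :
    ∫ x in Ioo (0:ℝ) 1, γ * x ^ (γ - 1) * g (x ^ γ) = ∫ y in Ioo (0:ℝ) 1, g y := by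
  have hderiv : ∀ x ∈ Ioo (0:ℝ) 1,
      HasDerivWithinAt (fun x : ℝ => x ^ γ) (γ * x ^ (γ - 1)) (Ioo 0 1) x :=
    fun x hx => (hasDerivAt_rpow_const (Or.inl hx.1.ne')).hasDerivWithinAt
  have hinj : InjOn (fun x : ℝ => x ^ γ) (Ioo 0 1) :=
    (rpow_left_injOn hγ.ne').mono fun x hx => hx.1.le
  have h := integral_image_eq_integral_abs_deriv_smul measurableSet_Ioo hderiv hinj g
  rw [image_rpow_Ioo_zero_one hγ] at h
  refine h ▸ setIntegral_congr_fun measurableSet_Ioo fun x hx => ?_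
  rw [smul_eq_mul, abs_of_pos (by have := rpow_pos_of_pos hx.1 (γ - 1); positivity)]

lemma setIntegral_Ioo_zero_one_comp_rpow_mul_rpow {γ : ℝ} (hγ : 0 < γ) (s : ℝ) (h : ℝ → ℝ) :
    ∫ r in Ioo (0:ℝ) 1, h (r ^ γ) * r ^ s =
      γ⁻¹ * ∫ x in Ioo (0:ℝ) 1, h x * x ^ ((s + 1) / γ - 1) := by
  rw [← setIntegral_Ioo_zero_one_comp_rpow (inv_pos.2 hγ), ← integral_const_mul]
  refine setIntegral_congr_fun (measurableSet_Ioo (a := (0:ℝ)) (b := 1)) fun x hx => ?_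
  have hx0 := hx.1
  rw [rpow_inv_rpow hx0.le hγ.ne', ← rpow_mul hx0.le]
  have hpow : x ^ ((s + 1) / γ - 1) = x ^ (γ⁻¹ - 1) * x ^ (γ⁻¹ * s) := by
    rw [← rpow_add hx0]; congr 1; ring
  rw [hpow]; ring

lemma hasSum_one_sub_one_sub_rpow (b : ℝ) {y : ℝ} (hy : |y| < 1) :
    HasSum (fun k : ℕ => (-1) ^ k * gbinom b (k + 1) * y ^ (k + 1)) (1 - (1 - y) ^ b) := by
  have h := hasSum_gbinom_mul_pow b (x := -y) (by rwa [abs_neg])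
  rw [← hasSum_nat_add_iff' 1] at h
  have hterm : (fun k : ℕ => -(gbinom b (k + 1) * (-y) ^ (k + 1))) =
      fun k => (-1) ^ k * gbinom b (k + 1) * y ^ (k + 1) := by
    ext k
    rw [neg_pow, pow_succ (-1 : ℝ)]
    ring
  have hsum : -((1 + -y) ^ b - ∑ i ∈ Finset.range 1, gbinom b i * (-y) ^ i) = 1 - (1 - y) ^ b := by
    simp [gbinom, sub_eq_add_neg]
  exact hterm ▸ hsum ▸ h.neg

section DominatedSeries

variable {α E : Type*} [MeasurableSpace α] {μ : Measure α} [NormedAddCommGroup E] [NormedSpace ℝ E]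
  {F : ℕ → α → E} {g : α → ℝ} {a : ℕ → ℝ}

lemma summable_norm_integral_of_norm_le_mul (hg : Integrable g μ) (ha : Summable a)
    (hF : ∀ k, ∀ᵐ x ∂μ, ‖F k x‖ ≤ a k * g x) :
    Summable fun k => ‖∫ x, F k x ∂μ‖ := by
  refine .of_nonneg_of_le (fun _ => norm_nonneg _) (fun k => ?_) (ha.mul_right (∫ x, g x ∂μ))
  rw [← integral_const_mul]
  exact norm_integral_le_of_norm_le (hg.const_mul (a k)) (hF k)

lemma hasSum_integral_of_norm_le_mul (hF_meas : ∀ k, AEStronglyMeasurable (F k) μ)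
    (hg : Integrable g μ) (ha : Summable a) (hF : ∀ k, ∀ᵐ x ∂μ, ‖F k x‖ ≤ a k * g x)
    {f : α → E} (hf : ∀ᵐ x ∂μ, HasSum (F · x) (f x)) :
    HasSum (fun k => ∫ x, F k x ∂μ) (∫ x, f x ∂μ) :=
  hasSum_integral_of_dominated_convergence (fun k x => a k * g x) hF_meas hF
    (ae_of_all _ fun _ => ha.mul_right _) (by simpa only [tsum_mul_right] using hg.const_mul _) hf

end DominatedSeries

lemma rpow_natCast_sub_mul_rpow_neg {x c : ℝ} (hx : 0 < x) (hc : 0 < c) (δ : ℝ) (n : ℕ) :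
    x ^ ((n : ℝ) - δ - 1) * c ^ (-(n : ℝ)) = (x / c) ^ n * x ^ (-δ - 1) := by
  rw [show (n : ℝ) - δ - 1 = n + (-δ - 1) by ring, rpow_add hx, rpow_neg hc.le, rpow_natCast,
    rpow_natCast, div_pow]
  ring

lemma activity_ratio_bounds {θ p x : ℝ} (hθ : 0 < θ) (hp : p ∈ Icc (0:ℝ) 1)
    (hx : x ∈ Ioo (0:ℝ) 1) :
    0 ≤ p * θ * x / (1 + θ * x) ∧ p * θ * x / (1 + θ * x) ≤ θ / (1 + θ) ∧
      p * θ * x / (1 + θ * x) ≤ θ * x := by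
  obtain ⟨hp0, hp1⟩ := hp
  obtain ⟨hx0, hx1⟩ := hx
  have hθx : 0 < 1 + θ * x := by positivity
  refine ⟨by positivity, ?_, ?_⟩
  · rw [div_le_div_iff₀ hθx (by positivity)]
    nlinarith [mul_pos hθ hx0, mul_nonneg (mul_nonneg hp0 hθ.le) (sub_nonneg.2 hx1.le),
      mul_nonneg (sub_nonneg.2 hp1) (mul_pos hθ hx0).le]
  · rw [div_le_iff₀ hθx]
    nlinarith [mul_pos hθ hx0, mul_nonneg (sub_nonneg.2 hp1) (mul_pos hθ hx0).le,
      mul_nonneg (mul_nonneg hp0 (mul_pos hθ hx0).le) (mul_pos hθ hx0).le]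

section ActivitySeries

variable {δ θ p : ℝ} (b : ℝ)

lemma activity_term_eq {x : ℝ} (hθ : 0 < θ) (hx : 0 < x) (k : ℕ) :
    (-1 : ℝ) ^ k * gbinom b (k + 1) * (p * θ) ^ (k + 1) *
        (x ^ ((k + 1 : ℝ) - δ - 1) * (1 + θ * x) ^ (-(k + 1 : ℝ))) =
      (-1) ^ k * gbinom b (k + 1) * (p * θ * x / (1 + θ * x)) ^ (k + 1) * x ^ (-δ - 1) := by
  have h := rpow_natCast_sub_mul_rpow_neg hx (by positivity : 0 < 1 + θ * x) δ (k + 1)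
  push_cast at h
  rw [h, mul_div_assoc, mul_pow]
  ring

lemma hasSum_activity_term {x : ℝ} (hθ : 0 < θ) (hp : p ∈ Icc (0:ℝ) 1) (hx : x ∈ Ioo (0:ℝ) 1) :
    HasSum (fun k : ℕ => (-1 : ℝ) ^ k * gbinom b (k + 1) * (p * θ) ^ (k + 1) *
        (x ^ ((k + 1 : ℝ) - δ - 1) * (1 + θ * x) ^ (-(k + 1 : ℝ))))
      ((1 - (1 - p * θ * x / (1 + θ * x)) ^ b) * x ^ (-δ - 1)) := by
  obtain ⟨hy0, hyq, -⟩ := activity_ratio_bounds hθ hp hx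
  have hq : θ / (1 + θ) < 1 := by rw [div_lt_one (by positivity)]; linarith
  simp_rw [activity_term_eq b hθ hx.1]
  exact (hasSum_one_sub_one_sub_rpow b (by rw [abs_of_nonneg hy0]; linarith)).mul_right _

lemma abs_activity_term_le {x : ℝ} (hθ : 0 < θ) (hp : p ∈ Icc (0:ℝ) 1) (hx : x ∈ Ioo (0:ℝ) 1)
    (k : ℕ) :
    |(-1 : ℝ) ^ k * gbinom b (k + 1) * (p * θ) ^ (k + 1) *
        (x ^ ((k + 1 : ℝ) - δ - 1) * (1 + θ * x) ^ (-(k + 1 : ℝ)))| ≤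
      |gbinom b (k + 1)| * (θ / (1 + θ)) ^ (k + 1) * ((1 + θ) * x ^ (-δ)) := by
  obtain ⟨hy0, hyq, hyx⟩ := activity_ratio_bounds hθ hp hx
  have hx0 := hx.1
  have hpow : (p * θ * x / (1 + θ * x)) ^ (k + 1) * x ^ (-δ - 1) ≤
      (θ / (1 + θ)) ^ (k + 1) * ((1 + θ) * x ^ (-δ)) := by
    have hxδ : x ^ (-δ) = x ^ (1 : ℝ) * x ^ (-δ - 1) := by
      rw [← rpow_add hx0]
      ring_nf
    calc (p * θ * x / (1 + θ * x)) ^ (k + 1) * x ^ (-δ - 1)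
        = (p * θ * x / (1 + θ * x)) ^ k * (p * θ * x / (1 + θ * x)) * x ^ (-δ - 1) := by
          rw [pow_succ]
      _ ≤ (θ / (1 + θ)) ^ k * (θ * x) * x ^ (-δ - 1) := by gcongr
      _ = (θ / (1 + θ)) ^ (k + 1) * ((1 + θ) * x ^ (-δ)) := by
          rw [hxδ, rpow_one, pow_succ]
          field_simp
  rw [activity_term_eq b hθ hx0, abs_mul, abs_mul, abs_mul, abs_pow, abs_neg, abs_one, one_pow,
    one_mul, abs_pow, abs_of_nonneg hy0, abs_of_pos (rpow_pos_of_pos hx0 _), mul_assoc]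
  exact mul_le_mul_of_nonneg_left hpow (abs_nonneg _) |>.trans_eq (by ring)

lemma ae_norm_activity_term_le (hθ : 0 < θ) (hp : p ∈ Icc (0:ℝ) 1) (k : ℕ) :
    ∀ᵐ x ∂(volume.restrict (Ioo (0:ℝ) 1)),
      ‖(-1 : ℝ) ^ k * gbinom b (k + 1) * (p * θ) ^ (k + 1) *
        (x ^ ((k + 1 : ℝ) - δ - 1) * (1 + θ * x) ^ (-(k + 1 : ℝ)))‖ ≤
      |gbinom b (k + 1)| * (θ / (1 + θ)) ^ (k + 1) * ((1 + θ) * x ^ (-δ)) :=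
  ae_restrict_of_forall_mem measurableSet_Ioo fun _ hx => abs_activity_term_le b hθ hp hx k

lemma integrableOn_activity_bound (θ : ℝ) (hδ : δ < 1) :
    IntegrableOn (fun x : ℝ => (1 + θ) * x ^ (-δ)) (Ioo 0 1) :=
  ((intervalIntegral.integrableOn_Ioo_rpow_iff one_pos).2 (by linarith)).const_mul _

lemma summable_activity_bound (hθ : 0 < θ) :
    Summable fun k => |gbinom b (k + 1)| * (θ / (1 + θ)) ^ (k + 1) :=
  (summable_nat_add_iff 1).2 <| summable_abs_gbinom_mul_pow b (by positivity)
    (by rw [div_lt_one (by positivity)]; linarith)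

lemma summable_abs_setIntegral_activity_term (hδ : δ < 1) (hθ : 0 < θ) (hp : p ∈ Icc (0:ℝ) 1) :
    Summable fun k : ℕ => |∫ x in Ioo (0:ℝ) 1, (-1 : ℝ) ^ k * gbinom b (k + 1) *
      (p * θ) ^ (k + 1) * (x ^ ((k + 1 : ℝ) - δ - 1) * (1 + θ * x) ^ (-(k + 1 : ℝ)))| := by
  simpa only [Real.norm_eq_abs] using summable_norm_integral_of_norm_le_mul
    (integrableOn_activity_bound θ hδ) (summable_activity_bound b hθ)
    (ae_norm_activity_term_le b hθ hp)

lemma hasSum_setIntegral_activity_term (hδ : δ < 1) (hθ : 0 < θ) (hp : p ∈ Icc (0:ℝ) 1) :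
    HasSum (fun k : ℕ => ∫ x in Ioo (0:ℝ) 1, (-1 : ℝ) ^ k * gbinom b (k + 1) *
        (p * θ) ^ (k + 1) * (x ^ ((k + 1 : ℝ) - δ - 1) * (1 + θ * x) ^ (-(k + 1 : ℝ))))
      (∫ x in Ioo (0:ℝ) 1, (1 - (1 - p * θ * x / (1 + θ * x)) ^ b) * x ^ (-δ - 1)) :=
  hasSum_integral_of_norm_le_mul (fun _ => by fun_prop) (integrableOn_activity_bound θ hδ)
    (summable_activity_bound b hθ) (ae_norm_activity_term_le b hθ hp)
    (ae_restrict_of_forall_mem measurableSet_Ioo fun _ hx => hasSum_activity_term b hθ hp hx)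

lemma two_mul_setIntegral_activity_eq (hδ : 0 < δ) :
    2 * ∫ r in Ioo (0:ℝ) 1,
        (1 - (1 - p * θ * r ^ (2 / δ) / (1 + θ * r ^ (2 / δ))) ^ b) * r ^ (-3 : ℝ) =
      δ * ∫ x in Ioo (0:ℝ) 1, (1 - (1 - p * θ * x / (1 + θ * x)) ^ b) * x ^ (-δ - 1) := by
  have h := setIntegral_Ioo_zero_one_comp_rpow_mul_rpow (γ := 2 / δ) (by positivity) (-3)
    (fun y => 1 - (1 - p * θ * y / (1 + θ * y)) ^ b)
  rw [show (-3 + 1) / (2 / δ) - 1 = -δ - 1 by field_simp; ring] at h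
  rw [h]
  field_simp

end ActivitySeries

theorem cellular_moment_activity_expansion_general (δ θ p b : ℝ) (hδ : δ ∈ Set.Ioo (0:ℝ) 1)
    (hθ : 0 < θ) (hp : p ∈ Set.Icc (0:ℝ) 1) :
    Summable (fun k : ℕ => |(-1 : ℝ) ^ k * gbinom b (k + 1) * (p * θ) ^ (k + 1) *
      (δ * ∫ x in Set.Ioo (0:ℝ) 1,
        x ^ ((k + 1 : ℝ) - δ - 1) * (1 + θ * x) ^ (-(k + 1 : ℝ)))|) ∧
    2 * ∫ r in Set.Ioo (0:ℝ) 1,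
        (1 - (1 - p * θ * r ^ (2 / δ) / (1 + θ * r ^ (2 / δ))) ^ b) * r ^ (-3 : ℝ) =
      ∑' k : ℕ, (-1 : ℝ) ^ k * gbinom b (k + 1) * (p * θ) ^ (k + 1) *
        (δ * ∫ x in Set.Ioo (0:ℝ) 1,
          x ^ ((k + 1 : ℝ) - δ - 1) * (1 + θ * x) ^ (-(k + 1 : ℝ))) ∧
    ∀ k : ℕ, 1 ≤ k →
      δ * (∫ x in Set.Ioo (0:ℝ) 1, x ^ ((k : ℝ) - δ - 1) * (1 + θ * x) ^ (-(k : ℝ))) =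
        δ / ((k : ℝ) - δ) * hyp2F1 (k : ℝ) ((k : ℝ) - δ) ((k : ℝ) + 1 - δ) (-θ) := by
  obtain ⟨hδ0, hδ1⟩ := hδ
  have hterm : ∀ k : ℕ, (-1 : ℝ) ^ k * gbinom b (k + 1) * (p * θ) ^ (k + 1) *
      (δ * ∫ x in Ioo (0:ℝ) 1, x ^ ((k + 1 : ℝ) - δ - 1) * (1 + θ * x) ^ (-(k + 1 : ℝ))) =
        δ * ∫ x in Ioo (0:ℝ) 1, (-1 : ℝ) ^ k * gbinom b (k + 1) * (p * θ) ^ (k + 1) *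
          (x ^ ((k + 1 : ℝ) - δ - 1) * (1 + θ * x) ^ (-(k + 1 : ℝ))) := fun k => by
    rw [integral_const_mul]; ring
  refine ⟨?_, ?_, fun k hk => ?_⟩
  · simp_rw [hterm, abs_mul]
    exact (summable_abs_setIntegral_activity_term b hδ1 hθ hp).mul_left _
  · rw [two_mul_setIntegral_activity_eq b hδ0, tsum_congr hterm, tsum_mul_left,
      (hasSum_setIntegral_activity_term b hδ1 hθ hp).tsum_eq]
  · have hk' : (1 : ℝ) ≤ k := by exact_mod_cast hk
    exact mul_setIntegral_eq_div_mul_hyp2F1 δ θ (by linarith)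

/-- For `δ ∈ (0,1)`, `θ > 0`, `p ∈ [0,1]`, `b > 0`: the series below converges absolutely and
`2∫_0^1 (1 - (1 - pθr^{2/δ}/(1+θr^{2/δ}))^b) r^{-3} dr
  = ∑_{k≥1} (-1)^{k+1} binom(b,k) (pθ)^k · δ∫_0^1 x^{k-δ-1}(1+θx)^{-k} dx`,
where by Euler's integral representation
`δ∫_0^1 x^{k-δ-1}(1+θx)^{-k} dx = (δ/(k-δ)) ₂F₁(k,k-δ;k+1-δ;-θ)`. -/
theorem cellular_moment_activity_expansion (δ θ p b : ℝ) (hδ : δ ∈ Set.Ioo (0:ℝ) 1)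
    (hθ : 0 < θ) (hp : p ∈ Set.Icc (0:ℝ) 1) (hb : 0 < b) :
    Summable (fun k : ℕ => |(-1 : ℝ) ^ k * gbinom b (k + 1) * (p * θ) ^ (k + 1) *
      (δ * ∫ x in Set.Ioo (0:ℝ) 1,
        x ^ ((k + 1 : ℝ) - δ - 1) * (1 + θ * x) ^ (-(k + 1 : ℝ)))|) ∧
    2 * ∫ r in Set.Ioo (0:ℝ) 1,
        (1 - (1 - p * θ * r ^ (2 / δ) / (1 + θ * r ^ (2 / δ))) ^ b) * r ^ (-3 : ℝ) =
      ∑' k : ℕ, (-1 : ℝ) ^ k * gbinom b (k + 1) * (p * θ) ^ (k + 1) *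
        (δ * ∫ x in Set.Ioo (0:ℝ) 1,
          x ^ ((k + 1 : ℝ) - δ - 1) * (1 + θ * x) ^ (-(k + 1 : ℝ))) ∧
    ∀ k : ℕ, 1 ≤ k →
      δ * (∫ x in Set.Ioo (0:ℝ) 1, x ^ ((k : ℝ) - δ - 1) * (1 + θ * x) ^ (-(k : ℝ))) =
        δ / ((k : ℝ) - δ) * hyp2F1 (k : ℝ) ((k : ℝ) - δ) ((k : ℝ) + 1 - δ) (-θ) :=
  cellular_moment_activity_expansion_general δ θ p b hδ hθ hp
end

section
/- Let δ ∈ (0,1), let t > 0 be fixed, define A(θ) = θδ·∫_0^1 s^{−δ}/(1+θs) ds, and for p ∈ (0,1] set θ_p = (t/p)^{1/δ}. Then lim_{p→0⁺} 1/(1 + p·A(θ_p)) = sinc δ/(t + sinc δ), where sinc δ = sin(πδ)/(πδ). (Since the success probability of the typical user in a Poisson cellular network with base-station activity probability p is p_s(θ,p) = 1/(1 + p·A(θ)), this states that p_s(θ,p) ∼ sinc δ/(p θ^δ + sinc δ) as p → 0 and θ → ∞ with pθ^δ = t held constant.) -/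
/-!
With `θ = (t/p)^{1/δ}`, i.e. `p θ^δ = t`, the substitution `u = θ s` turns `p A(θ)` into
`t δ ∫_0^θ u^{-δ}/(1+u) du`. As `p → 0⁺` we have `θ → ∞`, and the integral tends to
`∫_0^∞ u^{-δ}/(1+u) du`, which the substitution `x = u/(1+u)` identifies with the Beta value
`B(1-δ, δ) = Γ(1-δ) Γ(δ) = π / sin(πδ)` (Euler's reflection formula). Hence
`p A(θ) → π t δ / sin(πδ) = t / sinc δ`.
-/

open Real MeasureTheory Filter Set Topology
open ProbabilityTheory (beta)

section BetaIntegral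

lemma ofReal_cpow_mul_one_sub_cpow {x : ℝ} (hx : x ∈ Icc (0 : ℝ) 1) (a b : ℝ) :
    (x : ℂ) ^ ((a : ℂ) - 1) * (1 - (x : ℂ)) ^ ((b : ℂ) - 1)
      = ((x ^ (a - 1) * (1 - x) ^ (b - 1) : ℝ) : ℂ) := by
  rw [Complex.ofReal_mul, Complex.ofReal_cpow hx.1, Complex.ofReal_cpow (sub_nonneg.2 hx.2)]
  push_cast
  rfl

variable {a b : ℝ}

lemma integrableOn_rpow_mul_one_sub_rpow (ha : 0 < a) (hb : 0 < b) :
    IntegrableOn (fun x : ℝ => x ^ (a - 1) * (1 - x) ^ (b - 1)) (Ioo 0 1) := by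
  have h := Complex.betaIntegral_convergent (u := a) (v := b) (by simpa) (by simpa)
  rw [intervalIntegrable_iff_integrableOn_Ioc_of_le zero_le_one] at h
  have hℂ : IntegrableOn (fun x : ℝ => ((x ^ (a - 1) * (1 - x) ^ (b - 1) : ℝ) : ℂ)) (Ioc 0 1) :=
    h.congr_fun (fun x hx => ofReal_cpow_mul_one_sub_cpow (Ioc_subset_Icc_self hx) a b)
      measurableSet_Ioc
  have hℝ : IntegrableOn (fun x : ℝ => x ^ (a - 1) * (1 - x) ^ (b - 1)) (Ioc 0 1) := by
    simpa [IntegrableOn] using hℂ.re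
  exact hℝ.mono_set Ioo_subset_Ioc_self

lemma integral_rpow_mul_one_sub_rpow (ha : 0 < a) (hb : 0 < b) :
    ∫ x in Ioo (0 : ℝ) 1, x ^ (a - 1) * (1 - x) ^ (b - 1) = beta a b := by
  have hcongr : EqOn (fun x : ℝ => (x : ℂ) ^ ((a : ℂ) - 1) * (1 - (x : ℂ)) ^ ((b : ℂ) - 1))
      (fun x : ℝ => ((x ^ (a - 1) * (1 - x) ^ (b - 1) : ℝ) : ℂ)) (uIcc 0 1) := fun x hx =>
    ofReal_cpow_mul_one_sub_cpow (by rwa [uIcc_of_le zero_le_one] at hx) a b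
  rw [ProbabilityTheory.beta_eq_betaIntegralReal a b ha hb, Complex.betaIntegral,
    intervalIntegral.integral_congr hcongr, intervalIntegral.integral_ofReal, Complex.ofReal_re,
    intervalIntegral.integral_of_le zero_le_one, integral_Ioc_eq_integral_Ioo]

lemma beta_one_sub_self (s : ℝ) : beta (1 - s) s = π / sin (π * s) := by
  rw [ProbabilityTheory.beta, sub_add_cancel, Real.Gamma_one, div_one, mul_comm,
    Real.Gamma_mul_Gamma_one_sub]

end BetaIntegral

section HalfLineBeta

lemma image_div_one_add_Ioi : (fun u : ℝ => u / (1 + u)) '' Ioi 0 = Ioo 0 1 := by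
  ext x
  constructor
  · rintro ⟨u, hu, rfl⟩
    have h1u : (0 : ℝ) < 1 + u := by linarith [mem_Ioi.mp hu]
    exact ⟨div_pos hu h1u, (div_lt_one h1u).mpr (by linarith)⟩
  · rintro ⟨hx0, hx1⟩
    refine ⟨x / (1 - x), div_pos hx0 (by linarith), ?_⟩
    have h1x : (1 : ℝ) - x ≠ 0 := by linarith
    field_simp
    ring

lemma injOn_div_one_add_Ioi : InjOn (fun u : ℝ => u / (1 + u)) (Ioi 0) := by
  intro u hu v hv huv
  have h1u : (1 : ℝ) + u ≠ 0 := by linarith [mem_Ioi.mp hu]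
  have h1v : (1 : ℝ) + v ≠ 0 := by linarith [mem_Ioi.mp hv]
  field_simp at huv
  linarith

lemma hasDerivWithinAt_div_one_add_Ioi :
    ∀ u ∈ Ioi (0 : ℝ), HasDerivWithinAt (fun u : ℝ => u / (1 + u)) ((1 + u) ^ 2)⁻¹ (Ioi 0) u := by
  intro u hu
  have h1u : (1 : ℝ) + u ≠ 0 := by linarith [mem_Ioi.mp hu]
  refine ((hasDerivAt_id' u).div ((hasDerivAt_id' u).const_add 1) h1u).hasDerivWithinAt
    |>.congr_deriv ?_
  field_simp
  ring

lemma abs_inv_sq_smul_rpow_mul_one_sub_rpow {u : ℝ} (hu : 0 < u) (a b : ℝ) :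
    |((1 + u) ^ 2)⁻¹| • ((u / (1 + u)) ^ (a - 1) * (1 - u / (1 + u)) ^ (b - 1))
      = u ^ (a - 1) / (1 + u) ^ (a + b) := by
  have h1u : (0 : ℝ) < 1 + u := by linarith
  have hcompl : 1 - u / (1 + u) = (1 + u)⁻¹ := by field_simp; ring
  have hsplit : (1 + u) ^ (a + b) = (1 + u) ^ (a - 1) * (1 + u) ^ (b - 1) * (1 + u) ^ 2 := by
    rw [← rpow_add h1u, ← rpow_two, ← rpow_add h1u]
    ring_nf
  rw [hcompl, div_rpow hu.le h1u.le, inv_rpow h1u.le, abs_of_pos (by positivity), smul_eq_mul,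
    hsplit]
  simp only [div_eq_mul_inv, mul_inv]
  ring

variable {a b : ℝ}

lemma integrableOn_rpow_div_one_add_rpow (ha : 0 < a) (hb : 0 < b) :
    IntegrableOn (fun u : ℝ => u ^ (a - 1) / (1 + u) ^ (a + b)) (Ioi 0) := by
  have h := (integrableOn_image_iff_integrableOn_abs_deriv_smul measurableSet_Ioi
    hasDerivWithinAt_div_one_add_Ioi injOn_div_one_add_Ioi
    fun x : ℝ => x ^ (a - 1) * (1 - x) ^ (b - 1)).mp
    (by rw [image_div_one_add_Ioi]; exact integrableOn_rpow_mul_one_sub_rpow ha hb)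
  exact h.congr_fun (fun u hu => abs_inv_sq_smul_rpow_mul_one_sub_rpow hu a b) measurableSet_Ioi

lemma integral_rpow_div_one_add_rpow (ha : 0 < a) (hb : 0 < b) :
    ∫ u in Ioi (0 : ℝ), u ^ (a - 1) / (1 + u) ^ (a + b) = beta a b := by
  rw [← integral_rpow_mul_one_sub_rpow ha hb, ← image_div_one_add_Ioi,
    integral_image_eq_integral_abs_deriv_smul measurableSet_Ioi
      hasDerivWithinAt_div_one_add_Ioi injOn_div_one_add_Ioi]
  exact setIntegral_congr_fun measurableSet_Ioi fun u hu =>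
    (abs_inv_sq_smul_rpow_mul_one_sub_rpow hu a b).symm

end HalfLineBeta

section ReflectionIntegral

variable {δ : ℝ}

lemma rpow_neg_div_one_add_eq :
    (fun u : ℝ => u ^ (-δ) / (1 + u)) = fun u => u ^ ((1 - δ) - 1) / (1 + u) ^ ((1 - δ) + δ) := by
  simp only [sub_sub_cancel_left, sub_add_cancel, rpow_one]

lemma integrableOn_rpow_neg_div_one_add (hδ0 : 0 < δ) (hδ1 : δ < 1) :
    IntegrableOn (fun u : ℝ => u ^ (-δ) / (1 + u)) (Ioi 0) := by
  rw [rpow_neg_div_one_add_eq]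
  exact integrableOn_rpow_div_one_add_rpow (sub_pos.2 hδ1) hδ0

lemma integral_rpow_neg_div_one_add (hδ0 : 0 < δ) (hδ1 : δ < 1) :
    ∫ u in Ioi (0 : ℝ), u ^ (-δ) / (1 + u) = π / sin (π * δ) := by
  rw [rpow_neg_div_one_add_eq, integral_rpow_div_one_add_rpow (sub_pos.2 hδ1) hδ0,
    beta_one_sub_self]

lemma mul_integral_Ioo_rpow_neg_div_one_add_mul {θ : ℝ} (hθ : 0 < θ) :
    θ * ∫ s in Ioo (0 : ℝ) 1, s ^ (-δ) / (1 + θ * s)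
      = θ ^ δ * ∫ u in (0 : ℝ)..θ, u ^ (-δ) / (1 + u) := by
  have hscale : ∀ s ∈ Ioo (0 : ℝ) 1,
      s ^ (-δ) / (1 + θ * s) = θ ^ δ * ((θ * s) ^ (-δ) / (1 + θ * s)) := fun s hs => by
    rw [mul_rpow hθ.le hs.1.le, rpow_neg hθ.le]
    field_simp
  have hsub : ∫ s in (0 : ℝ)..1, (θ * s) ^ (-δ) / (1 + θ * s)
      = θ⁻¹ • ∫ u in θ * 0..θ * 1, u ^ (-δ) / (1 + u) :=
    intervalIntegral.integral_comp_mul_left (fun u => u ^ (-δ) / (1 + u)) hθ.ne'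
  rw [setIntegral_congr_fun measurableSet_Ioo hscale, integral_const_mul,
    ← integral_Ioc_eq_integral_Ioo, ← intervalIntegral.integral_of_le zero_le_one, hsub,
    mul_zero, mul_one, smul_eq_mul]
  field_simp

end ReflectionIntegral

lemma tendsto_div_rpow_nhdsGT_zero_atTop {t r : ℝ} (ht : 0 < t) (hr : 0 < r) :
    Tendsto (fun p : ℝ => (t / p) ^ r) (𝓝[>] 0) atTop := by
  simp only [div_eq_mul_inv]
  exact (tendsto_rpow_atTop hr).comp (tendsto_inv_nhdsGT_zero.const_mul_atTop ht)

/-- For `δ ∈ (0,1)` and fixed `t > 0`, with `A(θ) = θδ ∫_0^1 s^{-δ}/(1+θs) ds` and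
`θ_p = (t/p)^{1/δ}`, the success probability `p_s(θ_p,p) = 1/(1 + p A(θ_p))` satisfies
`lim_{p→0⁺} 1/(1 + p A(θ_p)) = sinc δ/(t + sinc δ)` where `sinc δ = sin(πδ)/(πδ)`. -/
theorem cellular_success_probability_limit (δ t : ℝ) (hδ : δ ∈ Set.Ioo (0:ℝ) 1)
    (ht : 0 < t) (A : ℝ → ℝ)
    (hA : ∀ θ : ℝ, A θ = θ * δ * ∫ s in Set.Ioo (0:ℝ) 1, s ^ (-δ) / (1 + θ * s)) :
    Tendsto (fun p : ℝ => 1 / (1 + p * A ((t / p) ^ (1 / δ))))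
      (nhdsWithin 0 (Set.Ioi 0))
      (nhds (Real.sin (π * δ) / (π * δ) / (t + Real.sin (π * δ) / (π * δ)))) := by
  obtain ⟨hδ0, hδ1⟩ := hδ
  have hpA : ∀ p ∈ Ioi (0 : ℝ), t * δ * ∫ u in (0 : ℝ)..(t / p) ^ (1 / δ), u ^ (-δ) / (1 + u)
      = p * A ((t / p) ^ (1 / δ)) := fun p (hp : 0 < p) => by
    have hθ : 0 < (t / p) ^ (1 / δ) := rpow_pos_of_pos (div_pos ht hp) _
    have hθδ : ((t / p) ^ (1 / δ)) ^ δ = t / p := by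
      rw [one_div, rpow_inv_rpow (div_pos ht hp).le hδ0.ne']
    rw [hA, mul_right_comm ((t / p) ^ (1 / δ)) δ,
      mul_integral_Ioo_rpow_neg_div_one_add_mul hθ, hθδ]
    field_simp
  have hlim : Tendsto (fun p : ℝ => p * A ((t / p) ^ (1 / δ))) (𝓝[>] 0)
      (𝓝 (t * δ * (π / sin (π * δ)))) := by
    rw [← integral_rpow_neg_div_one_add hδ0 hδ1]
    refine (tendsto_const_nhds.mul (intervalIntegral_tendsto_integral_Ioi 0
      (integrableOn_rpow_neg_div_one_add hδ0 hδ1)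
      (tendsto_div_rpow_nhdsGT_zero_atTop ht (one_div_pos.2 hδ0)))).congr' ?_
    exact eventually_mem_nhdsWithin.mono hpA
  have hsin : 0 < sin (π * δ) := sin_pos_of_pos_of_lt_pi (by positivity) (by nlinarith [pi_pos])
  have hsinc : sin (π * δ) / (π * δ) / (t + sin (π * δ) / (π * δ))
      = 1 / (1 + t * δ * (π / sin (π * δ))) := by
    field_simp
    ring
  rw [hsinc]
  exact tendsto_const_nhds.div (tendsto_const_nhds.add hlim) (by positivity)
end
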